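/- Let x ≥ γ/β and y > 0, and let S, I be the SIR solution with initial data (x, y). Then the set {t ≥ 0 : S(t) ≤ γ/β} is nonempty, its least element v(x, y) satisfies v(x, y) ≤ (ln x − ln(γ/β))/(β y). -/

import Mathlib

/-! Both equations are linear in the unknown once the other one is fixed, so the integrating
factor gives `S = x exp (-β ∫ I)` and `I = y exp (∫ (β S - γ))`. As long as `S > γ/β` the second
formula keeps `I ≥ y`, and then the first gives `S t ≤ x exp (-β y t)`, which equals `γ/β` at
`t = (log x - log (γ/β)) / (β y)`. Continuity of `S` makes `{t ≥ 0 | S t ≤ γ/β}` closed, so it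
has a least element. -/

open Set Filter

/-- An SIR solution with parameters β, γ and initial data (x, y):
differentiable functions S, I on [0,∞) with S' = -βSI, I' = βSI - γI,
S(0) = x, I(0) = y. -/
def IsSIRSolution (β γ x y : ℝ) (S I : ℝ → ℝ) : Prop :=
  S 0 = x ∧ I 0 = y ∧
  ∀ t, 0 ≤ t →
    HasDerivWithinAt S (-(β * S t * I t)) (Set.Ici 0) t ∧
    HasDerivWithinAt I (β * S t * I t - γ * I t) (Set.Ici 0) t

open intervalIntegral MeasureTheory

-- `f t * exp (-∫ₐᵗ g)` has zero right derivative, hence is constant.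
theorem eq_mul_exp_integral_of_hasDerivWithinAt {f g : ℝ → ℝ} {a t : ℝ}
    (hg : ContinuousOn g (Ici a))
    (hf : ∀ u ∈ Ici a, HasDerivWithinAt f (g u * f u) (Ici a) u) (ht : a ≤ t) :
    f t = f a * Real.exp (∫ s in a..t, g s) := by
  set G : ℝ → ℝ := fun u => ∫ s in a..u, g s with hG
  have hG_deriv : ∀ u ∈ Ici a, HasDerivWithinAt G (g u) (Ici u) u := fun u hu =>
    have hIoi : Ioi u ⊆ Ici a := fun v hv => hu.out.trans (le_of_lt hv)
    integral_hasDerivWithinAt_right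
      ((hg.mono Icc_subset_Ici_self).intervalIntegrable_of_Icc hu)
      ((hg.mono hIoi).stronglyMeasurableAtFilter_nhdsWithin measurableSet_Ioi u)
      ((hg u hu).mono hIoi)
  have hG_cont : ContinuousOn G (Icc a t) := by
    simpa only [uIcc_of_le ht] using continuousOn_primitive_interval
      (((hg.mono Icc_subset_Ici_self).integrableOn_Icc).mono_set (uIcc_of_le ht).subset)
  have hconst : ∀ u ∈ Icc a t, f u * Real.exp (-G u) = f a * Real.exp (-G a) := by
    refine constant_of_has_deriv_right_zero ?_ fun u hu => ?_
    · have hf_cont : ContinuousOn f (Icc a t) := fun u hu =>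
        (hf u hu.1).continuousWithinAt.mono Icc_subset_Ici_self
      exact hf_cont.mul (Real.continuous_exp.comp_continuousOn hG_cont.neg)
    · have hfu := (hf u hu.1).mono (Ici_subset_Ici.mpr hu.1)
      have hexp :
          HasDerivWithinAt (fun v => Real.exp (-G v)) (Real.exp (-G u) * -g u) (Ici u) u :=
        (hG_deriv u hu.1).neg.exp
      exact (hfu.mul hexp).congr_deriv (by ring)
  have h := hconst t ⟨ht, le_rfl⟩
  simp only [hG, integral_same, neg_zero, Real.exp_zero, mul_one] at h
  rw [← h, mul_assoc, ← Real.exp_add, neg_add_cancel, Real.exp_zero, mul_one]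

namespace IsSIRSolution

variable {β γ x y : ℝ} {S I : ℝ → ℝ}

theorem continuousOn_S (h : IsSIRSolution β γ x y S I) : ContinuousOn S (Ici 0) :=
  fun t ht => (h.2.2 t ht).1.continuousWithinAt

theorem continuousOn_I (h : IsSIRSolution β γ x y S I) : ContinuousOn I (Ici 0) :=
  fun t ht => (h.2.2 t ht).2.continuousWithinAt

theorem S_eq (h : IsSIRSolution β γ x y S I) {t : ℝ} (ht : 0 ≤ t) :
    S t = x * Real.exp (∫ s in (0 : ℝ)..t, -(β * I s)) := by
  rw [← h.1]
  exact eq_mul_exp_integral_of_hasDerivWithinAt (h.continuousOn_I.const_mul β).neg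
    (fun u hu => (h.2.2 u hu).1.congr_deriv (by ring)) ht

theorem I_eq (h : IsSIRSolution β γ x y S I) {t : ℝ} (ht : 0 ≤ t) :
    I t = y * Real.exp (∫ s in (0 : ℝ)..t, (β * S s - γ)) := by
  rw [← h.2.1]
  exact eq_mul_exp_integral_of_hasDerivWithinAt
    ((h.continuousOn_S.const_mul β).sub continuousOn_const)
    (fun u hu => (h.2.2 u hu).2.congr_deriv (by ring)) ht

theorem le_I_of_forall_le_S (h : IsSIRSolution β γ x y S I) (hy : 0 ≤ y) {t : ℝ} (ht : 0 ≤ t)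
    (hS : ∀ s ∈ Icc 0 t, γ ≤ β * S s) : y ≤ I t := by
  have hexponent : 0 ≤ ∫ s in (0 : ℝ)..t, (β * S s - γ) :=
    integral_nonneg ht fun s hs => sub_nonneg.2 (hS s hs)
  rw [h.I_eq ht]
  exact le_mul_of_one_le_right hy (Real.one_le_exp hexponent)

theorem S_le_of_forall_le_I (h : IsSIRSolution β γ x y S I) (hx : 0 ≤ x) (hβ : 0 ≤ β) {t : ℝ}
    (ht : 0 ≤ t) (hI : ∀ s ∈ Icc 0 t, y ≤ I s) : S t ≤ x * Real.exp (-(β * y * t)) := by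
  have hI_int : IntervalIntegrable (fun s => -(β * I s)) volume 0 t :=
    ((h.continuousOn_I.const_mul β).neg.mono Icc_subset_Ici_self).intervalIntegrable_of_Icc ht
  have hexponent : ∫ s in (0 : ℝ)..t, -(β * I s) ≤ -(β * y * t) :=
    calc ∫ s in (0 : ℝ)..t, -(β * I s)
        ≤ ∫ _ in (0 : ℝ)..t, -(β * y) :=
          integral_mono_on ht hI_int intervalIntegrable_const fun s hs =>
            neg_le_neg (mul_le_mul_of_nonneg_left (hI s hs) hβ)
      _ = -(β * y * t) := by simp only [intervalIntegral.integral_const, sub_zero, smul_eq_mul]; ring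
  rw [h.S_eq ht]
  gcongr

theorem exists_S_le (h : IsSIRSolution β γ x y S I) (hβ : 0 < β) (hγ : 0 < γ) (hx : γ / β ≤ x)
    (hy : 0 < y) :
    ∃ t ∈ Icc 0 ((Real.log x - Real.log (γ / β)) / (β * y)), S t ≤ γ / β := by
  set T := (Real.log x - Real.log (γ / β)) / (β * y)
  have hc : 0 < γ / β := div_pos hγ hβ
  have hT : 0 ≤ T := div_nonneg (sub_nonneg.2 (Real.log_le_log hc hx)) (mul_pos hβ hy).le
  by_contra! hS
  have hI : ∀ s ∈ Icc 0 T, y ≤ I s := fun s hs =>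
    h.le_I_of_forall_le_S hy.le hs.1 fun r hr =>
      ((div_le_iff₀' hβ).1 (hS r ⟨hr.1, hr.2.trans hs.2⟩).le)
  have hST : S T ≤ γ / β :=
    calc S T ≤ x * Real.exp (-(β * y * T)) := h.S_le_of_forall_le_I (hc.le.trans hx) hβ.le hT hI
      _ = γ / β := by
        rw [show -(β * y * T) = Real.log (γ / β) - Real.log x by
          simp only [T]; field_simp; ring, Real.exp_sub, Real.exp_log hc,
          Real.exp_log (hc.trans_le hx)]
        field_simp [(hc.trans_le hx).ne']
  exact (hS T ⟨hT, le_rfl⟩).not_ge hST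

end IsSIRSolution

theorem stmt_12 (β γ x y : ℝ) (hβ : 0 < β) (hγ : 0 < γ)
    (hx : γ / β ≤ x) (hy : 0 < y)
    (S I : ℝ → ℝ) (hSI : IsSIRSolution β γ x y S I) :
    {t : ℝ | 0 ≤ t ∧ S t ≤ γ / β}.Nonempty ∧
    ∃ v : ℝ, IsLeast {t : ℝ | 0 ≤ t ∧ S t ≤ γ / β} v ∧
      v ≤ (Real.log x - Real.log (γ / β)) / (β * y) := by
  obtain ⟨t, ht, hSt⟩ := hSI.exists_S_le hβ hγ hx hy
  have hne : {t : ℝ | 0 ≤ t ∧ S t ≤ γ / β}.Nonempty := ⟨t, ht.1, hSt⟩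
  have hbdd : BddBelow {t : ℝ | 0 ≤ t ∧ S t ≤ γ / β} := ⟨0, fun _ hs => hs.1⟩
  have hclosed : IsClosed {t : ℝ | 0 ≤ t ∧ S t ≤ γ / β} :=
    hSI.continuousOn_S.preimage_isClosed_of_isClosed isClosed_Ici isClosed_Iic
  exact ⟨hne, _, hclosed.isLeast_csInf hne hbdd, (csInf_le hbdd ⟨ht.1, hSt⟩).trans ht.2⟩
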